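/- Convergence of the price-adjustment dynamics: Suppose −1 < λ(β^d − β^s) < 0. Then for any initial state (p_0, q^d_0, q^s_0) ∈ ℝ³, the sequences defined by p_{k+1} = p_k + λ(q^d_k − q^s_k), q^d_{k+1} = α^d + β^d p_k + ε^d, q^s_{k+1} = α^s + β^s p_k + ε^s converge: p_k → p* = (α^s + ε^s − α^d − ε^d)/(β^d − β^s), and q^d_k, q^s_k both converge to q* = α^d + β^d p* + ε^d. -/

import Mathlib

/-!
The price error `e k = p k - p*` satisfies `e (k+2) = e (k+1) + μ e k` with `μ = λ(β^d - β^s)`.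
Its characteristic polynomial `X² - X - μ` has two complex roots `r, s` with `r + s = 1` and
`r s = -μ ∈ (0, 1)`, both in the open unit disk. Since `e (k+1) - r e k = s^k (e 1 - r e 0)`,
one gets `‖e (k+1)‖ ≤ ρ^(k+1) ‖e 0‖ + (k+1) ρ^k ‖e 1 - r e 0‖` with `ρ = max ‖r‖ ‖s‖ < 1`,
so `e → 0`. Both quantities are affine in the previous price, and the two affine maps agree
at `p*`.
-/

open Filter Topology

section LinearRecurrence

variable {𝕜 : Type*} [NormedField 𝕜]

theorem norm_le_of_eq_mul_add_pow_mul {z : ℕ → 𝕜} {r s w : 𝕜} {ρ : ℝ}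
    (hz : ∀ k, z (k + 1) = r * z k + s ^ k * w) (hr : ‖r‖ ≤ ρ) (hs : ‖s‖ ≤ ρ) (k : ℕ) :
    ‖z (k + 1)‖ ≤ ρ ^ (k + 1) * ‖z 0‖ + (k + 1) * ρ ^ k * ‖w‖ := by
  have hρ : 0 ≤ ρ := (norm_nonneg r).trans hr
  have step : ∀ n, ‖z (n + 1)‖ ≤ ρ * ‖z n‖ + ρ ^ n * ‖w‖ := fun n => by
    rw [hz n]
    calc ‖r * z n + s ^ n * w‖ ≤ ‖r‖ * ‖z n‖ + ‖s‖ ^ n * ‖w‖ := by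
          simpa only [norm_mul, norm_pow] using norm_add_le (r * z n) (s ^ n * w)
      _ ≤ ρ * ‖z n‖ + ρ ^ n * ‖w‖ := by gcongr
  induction k with
  | zero => simpa using step 0
  | succ k ih =>
    calc ‖z (k + 2)‖ ≤ ρ * ‖z (k + 1)‖ + ρ ^ (k + 1) * ‖w‖ := step (k + 1)
      _ ≤ ρ * (ρ ^ (k + 1) * ‖z 0‖ + (k + 1) * ρ ^ k * ‖w‖) + ρ ^ (k + 1) * ‖w‖ := by gcongr
      _ = ρ ^ (k + 2) * ‖z 0‖ + ((k + 1 : ℕ) + 1) * ρ ^ (k + 1) * ‖w‖ := by push_cast; ring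

theorem tendsto_zero_of_linear_recurrence {z : ℕ → 𝕜} {r s : 𝕜} (hr : ‖r‖ < 1) (hs : ‖s‖ < 1)
    (hz : ∀ k, z (k + 2) = (r + s) * z (k + 1) - r * s * z k) :
    Tendsto z atTop (𝓝 0) := by
  set ρ := max ‖r‖ ‖s‖
  have hρ0 : 0 ≤ ρ := (norm_nonneg r).trans (le_max_left _ _)
  have hρ1 : ρ < 1 := max_lt hr hs
  set w := z 1 - r * z 0
  have hw : ∀ k, z (k + 1) - r * z k = s ^ k * w := by
    intro k
    induction k with
    | zero => simp [w]
    | succ k ih => rw [hz]; linear_combination s * ih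
  have hbound := norm_le_of_eq_mul_add_pow_mul (fun k => (sub_eq_iff_eq_add'.1 (hw k)))
    (le_max_left ‖r‖ ‖s‖) (le_max_right ‖r‖ ‖s‖)
  have hgeom := tendsto_pow_atTop_nhds_zero_of_lt_one hρ0 hρ1
  have hmajorant : Tendsto (fun k : ℕ => ρ ^ (k + 1) * ‖z 0‖ + (k + 1) * ρ ^ k * ‖w‖)
      atTop (𝓝 0) := by
    have h := (((tendsto_add_atTop_iff_nat 1).2 hgeom).mul_const ‖z 0‖).add
      (((tendsto_self_mul_const_pow_of_lt_one hρ0 hρ1).add hgeom).mul_const ‖w‖)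
    simp only [zero_mul, add_zero] at h
    convert h using 2 with k
    ring
  rw [← tendsto_add_atTop_iff_nat 1, tendsto_zero_iff_norm_tendsto_zero]
  exact squeeze_zero (fun _ => norm_nonneg _) hbound hmajorant

end LinearRecurrence

theorem Complex.norm_lt_one_of_add_eq_one_of_mul_eq {r s : ℂ} {c : ℝ} (hsum : r + s = 1)
    (hprod : r * s = c) (hc0 : 0 < c) (hc1 : c < 1) : ‖r‖ < 1 := by
  obtain rfl : s = 1 - r := eq_sub_of_add_eq' hsum
  have hre := congrArg Complex.re hprod
  have him := congrArg Complex.im hprod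
  simp only [Complex.mul_re, Complex.mul_im, Complex.sub_re, Complex.sub_im, Complex.one_re,
    Complex.one_im, Complex.ofReal_re, Complex.ofReal_im] at hre him
  rw [← sq_lt_one_iff₀ (norm_nonneg r), Complex.sq_norm, Complex.normSq_apply]
  -- `r (1 - r)` is real, so either `r` is real or `Re r = 1/2`.
  rcases mul_eq_zero.1 (by linarith : r.im * (1 - 2 * r.re) = 0) with hreal | hhalf
  · rw [hreal] at hre ⊢
    nlinarith
  · nlinarith

theorem tendsto_zero_of_add_two_eq_sub_mul {x : ℕ → ℝ} {c : ℝ} (hc0 : 0 < c) (hc1 : c < 1)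
    (hx : ∀ k, x (k + 2) = x (k + 1) - c * x k) : Tendsto x atTop (𝓝 0) := by
  obtain ⟨r, hr⟩ : ∃ r : ℂ, 1 * (r * r) + (-1) * r + c = 0 :=
    exists_quadratic_eq_zero one_ne_zero (IsAlgClosed.exists_eq_mul_self _)
  have hsum : r + (1 - r) = 1 := add_sub_cancel r 1
  have hprod : r * (1 - r) = c := by linear_combination -hr
  have hz : ∀ k, (x (k + 2) : ℂ) = (r + (1 - r)) * x (k + 1) - r * (1 - r) * x k := by
    intro k
    rw [hsum, hprod, hx]
    push_cast
    ring
  have hz_lim := (tendsto_zero_of_linear_recurrence (z := fun k => (x k : ℂ))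
    (Complex.norm_lt_one_of_add_eq_one_of_mul_eq hsum hprod hc0 hc1)
    (Complex.norm_lt_one_of_add_eq_one_of_mul_eq ((add_comm _ _).trans hsum)
      ((mul_comm _ _).trans hprod) hc0 hc1) hz)
  simpa [Function.comp_def] using (Complex.continuous_re.tendsto 0).comp hz_lim

theorem stmt13 (αd βd εd αs βs εs lam : ℝ)
    (h1 : -1 < lam * (βd - βs)) (h2 : lam * (βd - βs) < 0)
    (p qd qs : ℕ → ℝ)
    (hp : ∀ k, p (k + 1) = p k + lam * (qd k - qs k))
    (hqd : ∀ k, qd (k + 1) = αd + βd * p k + εd)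
    (hqs : ∀ k, qs (k + 1) = αs + βs * p k + εs) :
    Tendsto p atTop (nhds ((αs + εs - αd - εd) / (βd - βs))) ∧
    Tendsto qd atTop
      (nhds (αd + βd * ((αs + εs - αd - εd) / (βd - βs)) + εd)) ∧
    Tendsto qs atTop
      (nhds (αd + βd * ((αs + εs - αd - εd) / (βd - βs)) + εd)) := by
  have hβ : βd - βs ≠ 0 := fun h => by simp [h] at h2
  set pstar := (αs + εs - αd - εd) / (βd - βs) with hpstar
  have hequil : αs + βs * pstar + εs = αd + βd * pstar + εd := by
    rw [hpstar]; field_simp; ring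
  have herr : ∀ k, p (k + 2) - pstar =
      (p (k + 1) - pstar) - -(lam * (βd - βs)) * (p k - pstar) := fun k => by
    rw [hp, hqd, hqs]
    linear_combination -lam * hequil
  have hP : Tendsto p atTop (𝓝 pstar) :=
    tendsto_sub_nhds_zero_iff.1 (tendsto_zero_of_add_two_eq_sub_mul (by linarith) (by linarith) herr)
  have hQ (α β ε : ℝ) (q : ℕ → ℝ) (hq : ∀ k, q (k + 1) = α + β * p k + ε) :
      Tendsto q atTop (𝓝 (α + β * pstar + ε)) := by
    rw [← tendsto_add_atTop_iff_nat 1, funext hq]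
    exact ((hP.const_mul β).const_add α).add_const ε
  exact ⟨hP, hQ αd βd εd qd hqd, hequil ▸ hQ αs βs εs qs hqs⟩
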